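/- If p − q < 1/2, then S_n / n → 0 almost surely as n → ∞. -/

import Mathlib

open MeasureTheory ProbabilityTheory Filter Real
open scoped ENNReal NNReal Topology Classical

noncomputable section

/-- The σ-algebra `σ(X_1, …, X_n)` generated by the first `n` steps. -/
def sigmaUpTo {Ω : Type*} (X : ℕ → Ω → ℝ) (n : ℕ) : MeasurableSpace Ω :=
  MeasurableSpace.comap (fun ω (k : Fin n) => X ((k : ℕ) + 1) ω) inferInstance

/-- Weak convergence of a sequence of measures on `ℝ` (convergence in distribution):
integrals of every bounded continuous function converge. -/
def TendstoInDist (μs : ℕ → Measure ℝ) (ν : Measure ℝ) : Prop :=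
  ∀ f : BoundedContinuousFunction ℝ ℝ,
    Tendsto (fun n => ∫ x, f x ∂(μs n)) atTop (𝓝 (∫ x, f x ∂ν))

/-!
Conditionally on the past, the next step has mean `(p - q) Sₙ / n`, so
`E[S²ₙ₊₁] ≤ (1 + 2(p - q)/n) E[S²ₙ] + 1`; for `p - q < 1/2` this recursion keeps `E[S²ₙ]`
linear in `n`. Along the squares `n = j²` the second moments of `Sₙ/n` are then `O(1/j²)`,
which is summable, so `S_{j²}/j² → 0` almost surely; as the steps are bounded by one, the gap
between consecutive squares contributes only `O(1/j)`.
-/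

lemma exists_le_mul_of_le_one_add_div_mul_add_one {a : ℝ} (ha : a < 1 / 2) {v : ℕ → ℝ}
    (hv0 : ∀ n, 0 ≤ v n) (hv1 : v 1 ≤ 1)
    (hrec : ∀ n, 1 ≤ n → v (n + 1) ≤ (1 + 2 * a / n) * v n + 1) :
    ∃ C, ∀ n, 1 ≤ n → v n ≤ C * n := by
  set C := max (1 / (1 - 2 * a)) 1
  have hC1 : 1 ≤ C := le_max_right _ _
  have hCa : 2 * a * C + 1 ≤ C := by
    have h := (div_le_iff₀ (by linarith : 0 < 1 - 2 * a)).mp (le_max_left (1 / (1 - 2 * a)) 1)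
    linarith
  refine ⟨C, fun n hn => ?_⟩
  induction n, hn using Nat.le_induction with
  | base => simpa using hv1.trans hC1
  | succ n hn ih =>
    have hn' : (1 : ℝ) ≤ n := by exact_mod_cast hn
    refine (hrec n hn).trans ?_
    push_cast
    rcases le_or_gt 0 (1 + 2 * a / n) with hpos | hneg
    · calc (1 + 2 * a / n) * v n + 1 ≤ (1 + 2 * a / n) * (C * n) + 1 := by gcongr
        _ = C * n + (2 * a * C + 1) := by field_simp; ring
        _ ≤ C * (n + 1) := by linarith
    · nlinarith [hv0 n]

lemma ae_tendsto_zero_of_summable_integral_sq {Ω : Type*} [MeasurableSpace Ω] {μ : Measure Ω}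
    {Y : ℕ → Ω → ℝ} (hY : ∀ j, Integrable (fun ω => Y j ω ^ 2) μ)
    (hsum : Summable fun j => ∫ ω, Y j ω ^ 2 ∂μ) :
    ∀ᵐ ω ∂μ, Tendsto (fun j => Y j ω) atTop (𝓝 0) := by
  have hmeas : ∀ j, AEMeasurable (fun ω => ENNReal.ofReal (Y j ω ^ 2)) μ :=
    fun j => (hY j).aemeasurable.ennreal_ofReal
  have hfin : ∫⁻ ω, ∑' j, ENNReal.ofReal (Y j ω ^ 2) ∂μ ≠ ∞ := by
    rw [lintegral_tsum hmeas]
    simp_rw [← ofReal_integral_eq_lintegral_ofReal (hY _) (ae_of_all _ fun _ => sq_nonneg _)]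
    rw [← ENNReal.ofReal_tsum_of_nonneg (fun j => integral_nonneg fun _ => sq_nonneg _) hsum]
    exact ENNReal.ofReal_ne_top
  filter_upwards [ae_lt_top' (AEMeasurable.tsum hmeas) hfin] with ω hω
  have hsq : Tendsto (fun j => Y j ω ^ 2) atTop (𝓝 0) := by
    simpa [ENNReal.toReal_ofReal (sq_nonneg _)] using
      (ENNReal.summable_toReal hω.ne).tendsto_atTop_zero
  rw [tendsto_zero_iff_abs_tendsto_zero]
  simpa [Function.comp_def, Real.sqrt_sq_eq_abs] using (Real.continuous_sqrt.tendsto 0).comp hsq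

lemma tendsto_div_of_tendsto_div_sq {T : ℕ → ℝ} (hT : ∀ m n, m ≤ n → |T n - T m| ≤ n - m)
    (h : Tendsto (fun j : ℕ => T (j ^ 2) / (j : ℝ) ^ 2) atTop (𝓝 0)) :
    Tendsto (fun n : ℕ => T n / n) atTop (𝓝 0) := by
  set u : ℕ → ℝ := fun j => |T (j ^ 2) / (j : ℝ) ^ 2| + 2 / j
  have hu : Tendsto u atTop (𝓝 0) := by
    simpa using h.abs.add (tendsto_const_div_atTop_nhds_zero_nat 2)
  have hsqrt : Tendsto Nat.sqrt atTop atTop :=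
    tendsto_atTop_atTop.mpr fun b => ⟨b * b, fun n hn => Nat.le_sqrt.mpr hn⟩
  refine squeeze_zero_norm' ?_ (hu.comp hsqrt)
  filter_upwards [eventually_ge_atTop 1] with n hn
  set j := Nat.sqrt n
  have hj : 1 ≤ j := Nat.le_sqrt.mpr hn
  have hjn : ((j ^ 2 : ℕ) : ℝ) ≤ n := by exact_mod_cast Nat.sqrt_le' n
  have hgap : (n : ℝ) - (j ^ 2 : ℕ) ≤ 2 * j := by
    have : n ≤ j ^ 2 + 2 * j := by nlinarith [Nat.lt_succ_sqrt' n]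
    have : (n : ℝ) ≤ (j ^ 2 : ℕ) + 2 * j := by exact_mod_cast this
    linarith
  have hTn : |T n| ≤ |T (j ^ 2)| + 2 * j := by
    have := abs_sub_abs_le_abs_sub (T n) (T (j ^ 2))
    linarith [hT _ _ (Nat.sqrt_le' n)]
  push_cast at hjn
  rw [Real.norm_eq_abs, abs_div, Nat.abs_cast]
  calc |T n| / n ≤ (|T (j ^ 2)| + 2 * j) / n := by gcongr
    _ ≤ (|T (j ^ 2)| + 2 * j) / (j : ℝ) ^ 2 := by gcongr
    _ = u j := by
      simp only [u, abs_div, abs_pow, Nat.abs_cast]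
      field_simp

lemma summable_integral_sq_div_sq_of_le_mul {Ω : Type*} [MeasurableSpace Ω] {μ : Measure Ω}
    {Z : ℕ → Ω → ℝ} {C : ℝ} (hC : ∀ n, 1 ≤ n → ∫ ω, Z n ω ^ 2 ∂μ ≤ C * n) :
    Summable fun j : ℕ => ∫ ω, (Z (j ^ 2) ω / (j : ℝ) ^ 2) ^ 2 ∂μ := by
  refine Summable.of_nonneg_of_le (fun j => integral_nonneg fun _ => sq_nonneg _) (fun j => ?_)
    ((summable_one_div_nat_pow.mpr one_lt_two).mul_left C)
  rcases Nat.eq_zero_or_pos j with rfl | hj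
  · simp
  simp_rw [div_pow, integral_div]
  rw [div_le_iff₀ (by positivity)]
  calc ∫ ω, Z (j ^ 2) ω ^ 2 ∂μ ≤ C * (j : ℝ) ^ 2 := by
        exact_mod_cast hC (j ^ 2) (Nat.one_le_pow _ _ hj)
    _ = C * (1 / (j : ℝ) ^ 2) * ((j : ℝ) ^ 2) ^ 2 := by field_simp

lemma integral_mul_condExp_of_stronglyMeasurable_left {Ω : Type*} {m m₀ : MeasurableSpace Ω}
    {μ : Measure Ω} (hm : m ≤ m₀) [SigmaFinite (μ.trim hm)] {f g : Ω → ℝ}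
    (hf : StronglyMeasurable[m] f) (hfg : Integrable (f * g) μ) (hg : Integrable g μ) :
    ∫ ω, f ω * μ[g | m] ω ∂μ = ∫ ω, f ω * g ω ∂μ :=
  (integral_congr_ae (condExp_mul_of_stronglyMeasurable_left hf hfg hg)).symm.trans
    (integral_condExp hm)

lemma sum_eq_card_filter_sub_card_filter {s : Finset ℕ} {g : ℕ → ℝ}
    (hg : ∀ k ∈ s, g k = 1 ∨ g k = -1 ∨ g k = 0) :
    ∑ k ∈ s, g k
      = ((s.filter (fun k => g k = 1)).card : ℝ) - (s.filter (fun k => g k = -1)).card := by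
  rw [Finset.card_filter, Finset.card_filter]
  push_cast
  rw [← Finset.sum_sub_distrib]
  refine Finset.sum_congr rfl fun k hk => ?_
  rcases hg k hk with h | h | h <;> norm_num [h]

lemma abs_sum_Icc_sub_sum_Icc_le {g : ℕ → ℝ} (hg : ∀ k, 1 ≤ k → |g k| ≤ 1) {m n : ℕ}
    (hmn : m ≤ n) : |∑ k ∈ Finset.Icc 1 n, g k - ∑ k ∈ Finset.Icc 1 m, g k| ≤ n - m := by
  rw [show Finset.Icc 1 n = Finset.Ioc 0 n from rfl,
    show Finset.Icc 1 m = Finset.Ioc 0 m from rfl,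
    ← Finset.sum_Ioc_consecutive g (Nat.zero_le m) hmn, add_sub_cancel_left]
  calc |∑ k ∈ Finset.Ioc m n, g k| ≤ ∑ k ∈ Finset.Ioc m n, (1 : ℝ) :=
        (Finset.abs_sum_le_sum_abs _ _).trans <| Finset.sum_le_sum fun k hk =>
          hg k (by have := (Finset.mem_Ioc.mp hk).1; omega)
    _ = n - m := by simp [Nat.cast_sub hmn]

section ERWD

variable {Ω : Type*} {X : ℕ → Ω → ℝ}

def partialSum (X : ℕ → Ω → ℝ) (n : ℕ) (ω : Ω) : ℝ := ∑ k ∈ Finset.Icc 1 n, X k ω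

lemma sigmaUpTo_le [m₀ : MeasurableSpace Ω] (hX : ∀ n, Measurable (X n)) (n : ℕ) :
    sigmaUpTo X n ≤ m₀ :=
  measurable_iff_comap_le.mp (measurable_pi_lambda _ fun k => hX ((k : ℕ) + 1))

lemma measurable_sigmaUpTo {n k : ℕ} (hk : k ∈ Finset.Icc 1 n) :
    Measurable[sigmaUpTo X n] (X k) := by
  obtain ⟨hk1, hkn⟩ := Finset.mem_Icc.mp hk
  obtain ⟨i, rfl⟩ : ∃ i, k = i + 1 := ⟨k - 1, by omega⟩
  exact (measurable_pi_apply (⟨i, by omega⟩ : Fin n) :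
    Measurable fun f : Fin n → ℝ => f _).comp (comap_measurable _)

lemma stronglyMeasurable_partialSum (n : ℕ) :
    StronglyMeasurable[sigmaUpTo X n] (partialSum X n) :=
  (Finset.measurable_sum _ fun _ hk => measurable_sigmaUpTo hk).stronglyMeasurable

lemma abs_partialSum_le (hX : ∀ k, 1 ≤ k → ∀ ω, |X k ω| ≤ 1) (n : ℕ) (ω : Ω) :
    |partialSum X n ω| ≤ n := by
  simpa [partialSum] using abs_sum_Icc_sub_sum_Icc_le (fun k hk => hX k hk ω) (Nat.zero_le n)

variable [MeasurableSpace Ω] {P : Measure Ω}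

lemma integrable_partialSum_sq [IsFiniteMeasure P] (hXmeas : ∀ n, Measurable (X n))
    (hX : ∀ k, 1 ≤ k → ∀ ω, |X k ω| ≤ 1) (n : ℕ) :
    Integrable (fun ω => partialSum X n ω ^ 2) P :=
  .of_bound ((Finset.measurable_sum _ fun k _ => hXmeas k).pow_const 2).aestronglyMeasurable
    ((n : ℝ) ^ 2) (ae_of_all _ fun ω => by
      simpa [Real.norm_eq_abs, abs_pow] using
        pow_le_pow_left₀ (abs_nonneg _) (abs_partialSum_le hX n ω) 2)

lemma integral_partialSum_sq_le [IsProbabilityMeasure P] (hXmeas : ∀ n, Measurable (X n))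
    (hX : ∀ k, 1 ≤ k → ∀ ω, |X k ω| ≤ 1) (n : ℕ) :
    ∫ ω, partialSum X n ω ^ 2 ∂P ≤ (n : ℝ) ^ 2 := by
  simpa using integral_mono (integrable_partialSum_sq (P := P) hXmeas hX n) (integrable_const _)
    fun ω => sq_le_sq' (abs_le.mp (abs_partialSum_le hX n ω)).1
      (abs_le.mp (abs_partialSum_le hX n ω)).2

lemma condExp_succ_eq_mul_partialSum [IsFiniteMeasure P] {p q : ℝ} {n : ℕ}
    (hXmeas : Measurable (X (n + 1)))
    (hXval : ∀ k, 1 ≤ k → ∀ ω, X k ω = 1 ∨ X k ω = -1 ∨ X k ω = 0)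
    (hcondp : P[Set.indicator {ω | X (n + 1) ω = 1} (fun _ => (1 : ℝ)) | sigmaUpTo X n]
      =ᵐ[P] fun ω =>
        (p * (((Finset.Icc 1 n).filter (fun k => X k ω = 1)).card : ℝ)
          + q * (((Finset.Icc 1 n).filter (fun k => X k ω = -1)).card : ℝ)) / n)
    (hcondq : P[Set.indicator {ω | X (n + 1) ω = -1} (fun _ => (1 : ℝ)) | sigmaUpTo X n]
      =ᵐ[P] fun ω =>
        (q * (((Finset.Icc 1 n).filter (fun k => X k ω = 1)).card : ℝ)
          + p * (((Finset.Icc 1 n).filter (fun k => X k ω = -1)).card : ℝ)) / n) :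
    P[X (n + 1) | sigmaUpTo X n] =ᵐ[P] fun ω => (p - q) / n * partialSum X n ω := by
  have hsplit : X (n + 1) = Set.indicator {ω | X (n + 1) ω = 1} (fun _ => (1 : ℝ))
      - Set.indicator {ω | X (n + 1) ω = -1} (fun _ => (1 : ℝ)) := by
    funext ω
    rcases hXval (n + 1) (by omega) ω with h | h | h <;> norm_num [Set.indicator_apply, h]
  have hint : ∀ x : ℝ, Integrable (Set.indicator {ω | X (n + 1) ω = x} (fun _ => (1 : ℝ))) P :=
    fun x => (integrable_const 1).indicator (hXmeas (measurableSet_singleton x))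
  rw [hsplit]
  filter_upwards [condExp_sub (hint 1) (hint (-1)) (sigmaUpTo X n), hcondp, hcondq]
    with ω hsub hp hq
  rw [hsub, Pi.sub_apply, hp, hq, partialSum,
    sum_eq_card_filter_sub_card_filter fun k hk => hXval k (Finset.mem_Icc.mp hk).1 ω]
  ring

lemma integral_partialSum_sq_succ_le [IsProbabilityMeasure P] (hXmeas : ∀ n, Measurable (X n))
    (hX : ∀ k, 1 ≤ k → ∀ ω, |X k ω| ≤ 1) {n : ℕ} {c : ℝ}
    (hE : P[X (n + 1) | sigmaUpTo X n] =ᵐ[P] fun ω => c * partialSum X n ω) :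
    ∫ ω, partialSum X (n + 1) ω ^ 2 ∂P ≤ (1 + 2 * c) * ∫ ω, partialSum X n ω ^ 2 ∂P + 1 := by
  set S := partialSum X n
  set Y := X (n + 1)
  have hS : Measurable S := Finset.measurable_sum _ fun k _ => hXmeas k
  have hSb := abs_partialSum_le hX n
  have hYb : ∀ ω, |Y ω| ≤ 1 := hX (n + 1) (by omega)
  have hS2 : Integrable (fun ω => S ω ^ 2) P := integrable_partialSum_sq hXmeas hX n
  have hY2 : Integrable (fun ω => Y ω ^ 2) P :=
    .of_bound ((hXmeas _).pow_const 2).aestronglyMeasurable 1 (ae_of_all _ fun ω => by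
      simpa [Real.norm_eq_abs, abs_pow] using hYb ω)
  have hSY : Integrable (S * Y) P :=
    .of_bound (hS.mul (hXmeas _)).aestronglyMeasurable n (ae_of_all _ fun ω => by
      simpa [Real.norm_eq_abs, abs_mul] using
        mul_le_mul (hSb ω) (hYb ω) (abs_nonneg _) (Nat.cast_nonneg n))
  have hcross : ∫ ω, S ω * Y ω ∂P = c * ∫ ω, S ω ^ 2 ∂P := by
    rw [← integral_mul_condExp_of_stronglyMeasurable_left (sigmaUpTo_le hXmeas n)
      (stronglyMeasurable_partialSum n) hSY
      (.of_bound (hXmeas _).aestronglyMeasurable 1 (ae_of_all _ hYb)), ← integral_const_mul]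
    refine integral_congr_ae ?_
    filter_upwards [hE] with ω hω
    rw [hω]
    ring
  have hY2le : ∫ ω, Y ω ^ 2 ∂P ≤ 1 := by
    simpa using integral_mono hY2 (integrable_const 1) fun ω =>
      (sq_le_one_iff_abs_le_one _).mpr (hYb ω)
  have hsucc : (fun ω => partialSum X (n + 1) ω ^ 2)
      = fun ω => S ω ^ 2 + 2 * (S ω * Y ω) + Y ω ^ 2 := by
    funext ω
    simp only [S, Y, partialSum]
    rw [Finset.sum_Icc_succ_top (by omega)]
    ring
  have hSY2 : Integrable (fun ω => 2 * (S ω * Y ω)) P := hSY.const_mul 2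
  rw [hsucc, integral_add (f := fun ω => S ω ^ 2 + 2 * (S ω * Y ω)) (hS2.add hSY2) hY2,
    integral_add hS2 hSY2, integral_const_mul, hcross]
  linarith

end ERWD

theorem erwd_full_memory_slln_general
    {Ω : Type*} [MeasurableSpace Ω] (P : Measure Ω) [IsProbabilityMeasure P]
    (p q : ℝ)
    (X : ℕ → Ω → ℝ) (hXmeas : ∀ n, Measurable (X n))
    (hXval : ∀ n, 1 ≤ n → ∀ ω, X n ω = 1 ∨ X n ω = -1 ∨ X n ω = 0)
    (hcondp : ∀ n : ℕ, 1 ≤ n →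
      P[Set.indicator {ω | X (n + 1) ω = 1} (fun _ => (1 : ℝ)) | sigmaUpTo X n]
        =ᵐ[P] fun ω =>
          (p * (((Finset.Icc 1 n).filter (fun k => X k ω = 1)).card : ℝ)
            + q * (((Finset.Icc 1 n).filter (fun k => X k ω = -1)).card : ℝ)) / n)
    (hcondq : ∀ n : ℕ, 1 ≤ n →
      P[Set.indicator {ω | X (n + 1) ω = -1} (fun _ => (1 : ℝ)) | sigmaUpTo X n]
        =ᵐ[P] fun ω =>
          (q * (((Finset.Icc 1 n).filter (fun k => X k ω = 1)).card : ℝ)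
            + p * (((Finset.Icc 1 n).filter (fun k => X k ω = -1)).card : ℝ)) / n)
    (hpq : p - q < 1 / 2) :
    ∀ᵐ ω ∂P, Tendsto (fun n : ℕ => (∑ k ∈ Finset.Icc 1 n, X k ω) / n) atTop (𝓝 0) := by
  have hX : ∀ k, 1 ≤ k → ∀ ω, |X k ω| ≤ 1 := fun k hk ω => by
    rcases hXval k hk ω with h | h | h <;> norm_num [h]
  obtain ⟨C, hC⟩ := exists_le_mul_of_le_one_add_div_mul_add_one hpq
    (v := fun n => ∫ ω, partialSum X n ω ^ 2 ∂P) (fun n => integral_nonneg fun _ => sq_nonneg _)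
    (by simpa using integral_partialSum_sq_le hXmeas hX 1) fun n hn => by
      have hE := condExp_succ_eq_mul_partialSum (hXmeas _) hXval (hcondp n hn) (hcondq n hn)
      simpa only [mul_div_assoc] using integral_partialSum_sq_succ_le hXmeas hX hE
  have hsq := ae_tendsto_zero_of_summable_integral_sq
    (fun j => by
      simpa only [div_pow] using (integrable_partialSum_sq hXmeas hX (j ^ 2)).div_const _)
    (summable_integral_sq_div_sq_of_le_mul hC)
  filter_upwards [hsq] with ω hω
  exact tendsto_div_of_tendsto_div_sq
    (fun m n hmn => abs_sum_Icc_sub_sum_Icc_le (fun k hk => hX k hk ω) hmn) hω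

/-- for the ERWD with full memory, if `p − q < 1/2` then `Sₙ/n → 0`
almost surely. -/
theorem erwd_full_memory_slln
    {Ω : Type*} [MeasurableSpace Ω] (P : Measure Ω) [IsProbabilityMeasure P]
    (p q r : ℝ) (hp : 0 < p) (hp1 : p < 1) (hq : 0 < q) (hq1 : q < 1)
    (hr : 0 < r) (hr1 : r < 1) (hpqr : p + q + r = 1)
    (X : ℕ → Ω → ℝ) (hXmeas : ∀ n, Measurable (X n))
    (hXval : ∀ n, 1 ≤ n → ∀ ω, X n ω = 1 ∨ X n ω = -1 ∨ X n ω = 0)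
    (hX1p : P {ω | X 1 ω = 1} = ENNReal.ofReal p)
    (hX1q : P {ω | X 1 ω = -1} = ENNReal.ofReal q)
    (hX1r : P {ω | X 1 ω = 0} = ENNReal.ofReal r)
    (hcondp : ∀ n : ℕ, 1 ≤ n →
      P[Set.indicator {ω | X (n + 1) ω = 1} (fun _ => (1 : ℝ)) | sigmaUpTo X n]
        =ᵐ[P] fun ω =>
          (p * (((Finset.Icc 1 n).filter (fun k => X k ω = 1)).card : ℝ)
            + q * (((Finset.Icc 1 n).filter (fun k => X k ω = -1)).card : ℝ)) / n)
    (hcondq : ∀ n : ℕ, 1 ≤ n →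
      P[Set.indicator {ω | X (n + 1) ω = -1} (fun _ => (1 : ℝ)) | sigmaUpTo X n]
        =ᵐ[P] fun ω =>
          (q * (((Finset.Icc 1 n).filter (fun k => X k ω = 1)).card : ℝ)
            + p * (((Finset.Icc 1 n).filter (fun k => X k ω = -1)).card : ℝ)) / n)
    (hpq : p - q < 1 / 2) :
    ∀ᵐ ω ∂P, Tendsto (fun n : ℕ => (∑ k ∈ Finset.Icc 1 n, X k ω) / n) atTop (𝓝 0) :=
  erwd_full_memory_slln_general P p q X hXmeas hXval hcondp hcondq hpq
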